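/- arXiv:1809.09256 — 3 statements merged into one kernel-verified Lean document; each statement's English description precedes it below -/
import Mathlib

section
/- Let R be a reduced Noetherian ring with minimal primes q_1, …, q_n. Then the integral closure R^N of R in its total ring of fractions is isomorphic, as an R-algebra, to the product ∏_{i=1}^n (R/q_i)^N of the normalizations of the quotient domains R/q_i (each (R/q_i)^N being the integral closure of the domain R/q_i in its fraction field). -/
/-! Let `q` run over the finitely many minimal primes of the reduced ring `R`. The map
`R → ∏ Frac(R/q)` makes the product the total ring of fractions of `R`: the minimal primes
intersect in the nilradical `0`, so an element outside all of them is a nonzerodivisor, while the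
minimal primes consist of zerodivisors; and any family of fractions is glued into one fraction
of `R` by elements lying in all minimal primes but one. Integral closure commutes with finite
products, and for elements of `Frac(R/q)` integrality over `R` and over `R/q` agree because
`R → R/q` is surjective. -/

universe u v

set_option synthInstance.maxHeartbeats 1000000
set_option maxHeartbeats 1000000

/-- A ring homomorphism is *birational* if it carries nonzerodivisors to nonzerodivisors and
the induced map on total rings of fractions is bijective. -/
def IsBirationalHom {A : Type u} {B : Type v} [CommRing A] [CommRing B] (f : A →+* B) : Prop :=
  ∃ hle : nonZeroDivisors A ≤ Submonoid.comap f (nonZeroDivisors B),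
    Function.Bijective
      (IsLocalization.map (M := nonZeroDivisors A) (T := nonZeroDivisors B)
        (FractionRing B) f hle : FractionRing A →+* FractionRing B)

/-- A ring homomorphism induces isomorphisms of all residue fields if for every prime `q`
of the target, the induced map on residue fields `κ(q.comap f) → κ(q)` is bijective. -/
def InducesResidueFieldIsos {A : Type u} {B : Type v} [CommRing A] [CommRing B]
    (f : A →+* B) : Prop :=
  ∀ (q : Ideal B) [q.IsPrime],
    Function.Bijective
      (IsLocalRing.ResidueField.map (Localization.localRingHom (q.comap f) q f rfl))

/-- A commutative ring `A` is seminormal if every finite birational (injective) extension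
which induces a bijection on prime spectra and isomorphisms of all residue fields is an
isomorphism. -/
def IsSeminormalRing (A : Type u) [CommRing A] : Prop :=
  ∀ (B : Type u) [CommRing B] (f : A →+* B),
    Function.Injective f → f.Finite → IsBirationalHom f →
    Function.Bijective (PrimeSpectrum.comap f) →
    InducesResidueFieldIsos f →
    Function.Bijective f

/-- `S` is the seminormalization of `R` if it is the smallest seminormal intermediate ring
between `R` and the normalization `R^N` (the integral closure of `R` in its total ring of
fractions). -/
def IsSeminormalization (R : Type u) [CommRing R]
    (S : Subalgebra R (FractionRing R)) : Prop :=
  S ≤ integralClosure R (FractionRing R) ∧ IsSeminormalRing S ∧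
    ∀ T : Subalgebra R (FractionRing R),
      T ≤ integralClosure R (FractionRing R) → IsSeminormalRing T → S ≤ T

/-- The conductor `Ann_R (R^N / R)` of a commutative ring in its normalization. -/
noncomputable def conductorIdeal (R : Type u) [CommRing R] : Ideal R :=
  Module.annihilator R
    (↥(integralClosure R (FractionRing R)) ⧸
      LinearMap.range (Algebra.linearMap R ↥(integralClosure R (FractionRing R))))

/-- The pullback (fiber product) of a diagram of ring maps `A → T ← B`, realized as the
subring of `A × B` of pairs with equal images in `T`. -/
def ringPullback {A : Type u} {B : Type v} {T : Type*} [CommRing A] [CommRing B] [CommRing T]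
    (f : A →+* T) (g : B →+* T) : Subring (A × B) :=
  RingHom.eqLocus (f.comp (RingHom.fst A B)) (g.comp (RingHom.snd A B))

open Polynomial nonZeroDivisors

section IntegralClosure

variable {R : Type*} [CommRing R]

theorem IsIntegral.pi_iff {ι : Type*} [Finite ι] {A : ι → Type*} [∀ i, CommRing (A i)]
    [∀ i, Algebra R (A i)] {x : Π i, A i} : IsIntegral R x ↔ ∀ i, IsIntegral R (x i) := by
  refine ⟨fun hx i => hx.map (Pi.evalAlgHom R A i), fun hx => ?_⟩
  have := Fintype.ofFinite ι
  choose p hp using hx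
  refine ⟨∏ i, p i, monic_prod_of_monic _ _ fun i _ => (hp i).1, funext fun i => ?_⟩
  have hi : aeval (x i) (∏ j, p j) = 0 := by
    rw [map_prod]
    exact Finset.prod_eq_zero (Finset.mem_univ i) ((aeval_def _ _).trans (hp i).2)
  exact (aeval_algHom_apply (Pi.evalAlgHom R A i) x _).symm.trans hi

variable (R) in
def integralClosurePiEquiv {ι : Type*} [Finite ι] (A : ι → Type*) [∀ i, CommRing (A i)]
    [∀ i, Algebra R (A i)] :
    integralClosure R (Π i, A i) ≃ₐ[R] Π i, integralClosure R (A i) where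
  toFun x i := ⟨x.1 i, IsIntegral.pi_iff.mp x.2 i⟩
  invFun y := ⟨fun i => y i, IsIntegral.pi_iff.mpr fun i => (y i).2⟩
  left_inv _ := rfl
  right_inv _ := rfl
  map_mul' _ _ := rfl
  map_add' _ _ := rfl
  commutes' _ := rfl

theorem integralClosure_restrictScalars {S B : Type*} [CommRing S] [CommRing B] [Algebra R S]
    [Algebra S B] [Algebra R B] [IsScalarTower R S B] [Algebra.IsIntegral R S] :
    (integralClosure S B).restrictScalars R = integralClosure R B :=
  Subalgebra.ext fun x => ⟨isIntegral_trans x, IsIntegral.tower_top⟩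

end IntegralClosure

theorem Ideal.Quotient.mk_sum_eq_of_mem {R ι : Type*} [CommRing R] [Fintype ι] (I : Ideal R)
    (f : ι → R) (i : ι) (hf : ∀ j ≠ i, f j ∈ I) :
    Ideal.Quotient.mk I (∑ j, f j) = Ideal.Quotient.mk I (f i) := by
  rw [map_sum]
  exact Finset.sum_eq_single_of_mem i (Finset.mem_univ i) fun j _ hj =>
    Ideal.Quotient.eq_zero_iff_mem.mpr (hf j hj)

section MinimalPrimes

variable {R : Type*} [CommRing R]

instance (p : minimalPrimes R) : (p : Ideal R).IsPrime := p.2.isPrime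

theorem eq_zero_of_forall_mem_minimalPrimes [IsReduced R] {x : R}
    (hx : ∀ p ∈ minimalPrimes R, x ∈ p) : x = 0 := by
  have hx : x ∈ sInf (minimalPrimes R) := Submodule.mem_sInf.mpr hx
  rwa [minimalPrimes, Ideal.sInf_minimalPrimes, Ideal.radical_bot_of_isReduced] at hx

theorem mem_nonZeroDivisors_of_forall_notMem_minimalPrimes [IsReduced R] {s : R}
    (hs : ∀ p ∈ minimalPrimes R, s ∉ p) : s ∈ R⁰ :=
  mem_nonZeroDivisors_iff_right.mpr fun _ hx => eq_zero_of_forall_mem_minimalPrimes fun p hp =>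
    (hp.isPrime.mem_or_mem (hx ▸ p.zero_mem)).resolve_right (hs p hp)

theorem exists_notMem_forall_ne_mem_minimalPrimes [Finite (minimalPrimes R)]
    (p : minimalPrimes R) :
    ∃ e : R, e ∉ (p : Ideal R) ∧ ∀ p' ≠ p, e ∈ (p' : Ideal R) := by
  have := Fintype.ofFinite (minimalPrimes R)
  classical
  have hinf : ¬ (Finset.univ.erase p).inf (fun p' : minimalPrimes R => (p' : Ideal R)) ≤ p := by
    intro hle
    obtain ⟨p', hp', hle'⟩ := (Ideal.IsPrime.inf_le' inferInstance).mp hle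
    exact (Finset.mem_erase.mp hp').1
      (Subtype.ext (le_antisymm hle' (p.2.2 ⟨inferInstance, bot_le⟩ hle')))
  obtain ⟨e, he, hep⟩ := SetLike.not_le_iff_exists.mp hinf
  exact ⟨e, hep, fun p' hp' => Finset.inf_le (f := fun p' : minimalPrimes R => (p' : Ideal R))
    (Finset.mem_erase.mpr ⟨hp', Finset.mem_univ p'⟩) he⟩

end MinimalPrimes

section TotalRingOfFractions

variable {R : Type*} [CommRing R]

theorem algebraMap_pi_fractionRing_quotient_apply (r : R) (p : minimalPrimes R) :
    algebraMap R (Π p : minimalPrimes R, FractionRing (R ⧸ (p : Ideal R))) r p =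
      algebraMap (R ⧸ (p : Ideal R)) _ (Ideal.Quotient.mk _ r) :=
  IsScalarTower.algebraMap_apply R (R ⧸ (p : Ideal R)) _ r

theorem exists_mul_algebraMap_eq_pi_fractionRing_quotient [IsReduced R]
    [Finite (minimalPrimes R)] (z : Π p : minimalPrimes R, FractionRing (R ⧸ (p : Ideal R))) :
    ∃ x : R × R⁰, z * algebraMap R _ x.2 = algebraMap R _ x.1 := by
  have := Fintype.ofFinite (minimalPrimes R)
  choose e he_notMem he_mem using exists_notMem_forall_ne_mem_minimalPrimes (R := R)
  choose x hx using fun p : minimalPrimes R => IsLocalization.surj (R ⧸ (p : Ideal R))⁰ (z p)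
  choose a ha using fun p : minimalPrimes R => Ideal.Quotient.mk_surjective (x p).1
  choose b hb using fun p : minimalPrimes R =>
    Ideal.Quotient.mk_surjective ((x p).2 : R ⧸ (p : Ideal R))
  -- `e p` is a unit modulo `p` and vanishes modulo the other minimal primes, so it glues
  -- the local numerators and denominators
  have glue : ∀ (c : minimalPrimes R → R) (p : minimalPrimes R),
      Ideal.Quotient.mk (p : Ideal R) (∑ p', e p' * c p') =
      Ideal.Quotient.mk (p : Ideal R) (e p) * Ideal.Quotient.mk (p : Ideal R) (c p) := by
    intro c p
    rw [Ideal.Quotient.mk_sum_eq_of_mem _ _ p fun p' hp' =>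
      Ideal.mul_mem_right _ _ (he_mem p' p hp'.symm), map_mul]
  have hs : ∑ p, e p * b p ∈ R⁰ := by
    refine mem_nonZeroDivisors_of_forall_notMem_minimalPrimes fun q hq hsq => ?_
    lift q to minimalPrimes R using hq with p
    have hsp : Ideal.Quotient.mk (p : Ideal R) (∑ p', e p' * b p') = 0 :=
      Ideal.Quotient.eq_zero_iff_mem.mpr hsq
    rw [glue b p, hb] at hsp
    rcases mul_eq_zero.mp hsp with he | hb
    · exact he_notMem p (Ideal.Quotient.eq_zero_iff_mem.mp he)
    · exact nonZeroDivisors.ne_zero (x p).2.2 hb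
  refine ⟨⟨∑ p, e p * a p, ⟨_, hs⟩⟩, funext fun p => ?_⟩
  rw [Pi.mul_apply, algebraMap_pi_fractionRing_quotient_apply,
    algebraMap_pi_fractionRing_quotient_apply, glue, glue, ha, hb, map_mul, map_mul,
    mul_left_comm, hx]

theorem isLocalization_pi_fractionRing_quotient_minimalPrimes [IsReduced R]
    [Finite (minimalPrimes R)] :
    IsLocalization R⁰ (Π p : minimalPrimes R, FractionRing (R ⧸ (p : Ideal R))) := by
  refine (isLocalization_iff _ _).mpr ⟨fun y => Pi.isUnit_iff.mpr fun p => ?_,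
    exists_mul_algebraMap_eq_pi_fractionRing_quotient, fun {a b} hab => ⟨1, ?_⟩⟩
  · rw [algebraMap_pi_fractionRing_quotient_apply, isUnit_iff_ne_zero, Ne,
      IsFractionRing.to_map_eq_zero_iff, Ideal.Quotient.eq_zero_iff_mem]
    exact Set.disjoint_right.mp (Ideal.disjoint_nonZeroDivisors_of_mem_minimalPrimes p.2) y.2
  · rw [← sub_eq_zero, ← mul_sub]
    refine mul_eq_zero_of_right _ (eq_zero_of_forall_mem_minimalPrimes fun p hp => ?_)
    have hp := congrFun hab ⟨p, hp⟩
    rw [algebraMap_pi_fractionRing_quotient_apply, algebraMap_pi_fractionRing_quotient_apply] at hp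
    exact Ideal.Quotient.eq.mp (IsFractionRing.injective _ _ hp)

end TotalRingOfFractions

/-- For a reduced Noetherian ring `R` with minimal primes `q₁, …, qₙ`, the
integral closure of `R` in its total ring of fractions is isomorphic, compatibly with the
maps from `R`, to the product of the normalizations of the quotient domains `R/qᵢ`. -/
theorem statement5 (R : Type) [CommRing R] [IsReduced R] [IsNoetherianRing R] :
    ∃ e : ↥(integralClosure R (FractionRing R)) ≃+*
        (Π q : minimalPrimes R,
          ↥(integralClosure (R ⧸ (q : Ideal R)) (FractionRing (R ⧸ (q : Ideal R))))),
      ∀ r : R, e (algebraMap R ↥(integralClosure R (FractionRing R)) r) =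
        fun q : minimalPrimes R =>
          algebraMap (R ⧸ (q : Ideal R))
            ↥(integralClosure (R ⧸ (q : Ideal R)) (FractionRing (R ⧸ (q : Ideal R))))
            (Ideal.Quotient.mk (q : Ideal R) r) := by
  have := (minimalPrimes.finite_of_isNoetherianRing R).to_subtype
  have := isLocalization_pi_fractionRing_quotient_minimalPrimes (R := R)
  let e : integralClosure R (FractionRing R) ≃ₐ[R] Π q : minimalPrimes R,
      (integralClosure (R ⧸ (q : Ideal R))
        (FractionRing (R ⧸ (q : Ideal R)))).restrictScalars R :=
    (IsLocalization.algEquiv R⁰ (FractionRing R)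
      (Π q : minimalPrimes R, FractionRing (R ⧸ (q : Ideal R)))).mapIntegralClosure.trans <|
      (integralClosurePiEquiv R fun q : minimalPrimes R =>
        FractionRing (R ⧸ (q : Ideal R))).trans <|
        AlgEquiv.piCongrRight fun q => Subalgebra.equivOfEq _ _ integralClosure_restrictScalars.symm
  refine ⟨e.toRingEquiv, fun r => funext fun q => Subtype.ext ?_⟩
  exact (congrArg Subtype.val (congrFun (e.commutes r) q)).trans
    (IsScalarTower.algebraMap_apply R (R ⧸ (q : Ideal R)) _ r)
end

section
/- The ring R = (ℤ/2ℤ)[t, x, y]/(x² − t·y²) is seminormal (though it is not weakly normal). -/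
universe u v

set_option synthInstance.maxHeartbeats 1000000
set_option maxHeartbeats 1000000

/-!
Under `t = u²`, `x = u y`, the ring `R` becomes the subring `k[u², u y, y]` of `S = k[u, y]`, a
normal domain with the same fraction field, and `S = R + u · k[u²]`. A finite birational extension
`B` of `R` therefore sits between `R` and `S`. If some `b ∈ B` were congruent modulo `R` to
`u h(u²)` with `h ≠ 0`, then at the prime `q` of `B` lying over `y = 0` the residue class of
`b / h(t)` would be `u`, whereas residue classes of `R` at `q ∩ R` are quotients of polynomials in
`u²`. So the residue-field condition forces `B = R`.
-/

theorem RingHom.exists_comp_eq_of_forall_mem_range {B S K : Type*} [CommRing B] [CommRing S]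
    [CommRing K] {σ : S →+* K} (hσ : Function.Injective σ) (ι : B →+* K)
    (h : ∀ b, ∃ s, σ s = ι b) : ∃ β : B →+* S, σ.comp β = ι := by
  choose β hβ using h
  exact ⟨{ toFun := β
           map_one' := hσ (by simp [hβ])
           map_mul' := fun a b => hσ (by simp [hβ])
           map_zero' := hσ (by simp [hβ])
           map_add' := fun a b => hσ (by simp [hβ]) }, RingHom.ext hβ⟩

theorem IsBirationalHom.exists_injective_comp_eq_algebraMap {A B K : Type*} [CommRing A]
    [CommRing B] [CommRing K] [Algebra A K] [IsFractionRing A K] {f : A →+* B}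
    (hf : IsBirationalHom f) :
    ∃ ι : B →+* K, Function.Injective ι ∧ ι.comp f = algebraMap A K := by
  obtain ⟨hle, hbij⟩ := hf
  let e := RingEquiv.ofBijective _ hbij
  let E := IsLocalization.algEquiv (nonZeroDivisors A) (FractionRing A) K
  refine ⟨(E : FractionRing A →+* K).comp (e.symm.toRingHom.comp (algebraMap B _)),
    E.injective.comp (e.symm.injective.comp (IsFractionRing.injective B _)),
    RingHom.ext fun r => ?_⟩
  have : algebraMap B (FractionRing B) (f r) = e (algebraMap A (FractionRing A) r) :=
    (IsLocalization.map_eq hle r).symm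
  simp [this]

theorem IsBirationalHom.exists_injective_lift_of_isIntegrallyClosed {A B S K : Type*}
    [CommRing A] [CommRing B] [CommRing S] [CommRing K] [Algebra A S] [Algebra A K] [Algebra S K]
    [IsScalarTower A S K] [IsFractionRing A K] [IsFractionRing S K] [IsIntegrallyClosed S]
    {f : A →+* B} (hf : IsBirationalHom f) (hint : f.IsIntegral) :
    ∃ β : B →+* S, Function.Injective β ∧ β.comp f = algebraMap A S := by
  obtain ⟨ι, hι, hιf⟩ := hf.exists_injective_comp_eq_algebraMap (K := K)
  have hint' : ∀ b, ∃ s, algebraMap S K s = ι b := fun b => by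
    have hb : IsIntegral A (ι b) := by
      have := (hint b).map ι
      rwa [hιf] at this
    exact IsIntegrallyClosed.isIntegral_iff.mp (hb.tower_top (A := S))
  obtain ⟨β, hβ⟩ :=
    RingHom.exists_comp_eq_of_forall_mem_range (IsFractionRing.injective S K) ι hint'
  refine ⟨β, fun a b hab => hι ?_, ?_⟩
  · rw [← hβ]; exact congrArg (algebraMap S K) hab
  · apply RingHom.ext fun r => IsFractionRing.injective S K ?_
    rw [← RingHom.comp_apply, ← RingHom.comp_assoc, hβ, hιf,
      ← IsScalarTower.algebraMap_apply]

theorem InducesResidueFieldIsos.exists_mul_sub_mul_mem {A B : Type*} [CommRing A] [CommRing B]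
    {f : A →+* B} (hf : InducesResidueFieldIsos f) (q : Ideal B) [q.IsPrime] (b : B) {c : B}
    (hc : c ∉ q) : ∃ r s : A, f s ∉ q ∧ b * f s - c * f r ∈ q := by
  obtain ⟨η, hη⟩ := (hf q).2 (algebraMap B q.ResidueField b / algebraMap B q.ResidueField c)
  obtain ⟨x, y, hy, rfl⟩ := IsFractionRing.div_surjective (A := A ⧸ q.comap f) η
  obtain ⟨r, rfl⟩ := Ideal.Quotient.mk_surjective x
  obtain ⟨s, rfl⟩ := Ideal.Quotient.mk_surjective y
  have hs : f s ∉ q := fun h => nonZeroDivisors.ne_zero hy (Ideal.Quotient.eq_zero_iff_mem.mpr h)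
  refine ⟨r, s, hs, ?_⟩
  change Ideal.ResidueField.map _ q f rfl _ = _ at hη
  rw [map_div₀, Ideal.algebraMap_quotient_residueField_mk,
    Ideal.algebraMap_quotient_residueField_mk, Ideal.ResidueField.map_algebraMap,
    Ideal.ResidueField.map_algebraMap, div_eq_div_iff] at hη
  · rw [← Ideal.algebraMap_residueField_eq_zero, map_sub, map_mul, map_mul]
    linear_combination -hη
  all_goals simpa

namespace Polynomial

variable {R : Type*} [CommSemiring R]

theorem coeff_expand_two_add_X_mul_expand_two_mul (a b : R[X]) (k : ℕ) :
    (expand R 2 a + X * expand R 2 b).coeff (2 * k) = a.coeff k := by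
  rcases k with _ | k
  · simp [coeff_expand]
  · rw [coeff_add, coeff_expand_mul' two_pos, show 2 * (k + 1) = 2 * k + 1 + 1 by ring,
      coeff_X_mul, coeff_expand two_pos, if_neg (by omega), add_zero]

theorem coeff_expand_two_add_X_mul_expand_two_mul_add_one (a b : R[X]) (k : ℕ) :
    (expand R 2 a + X * expand R 2 b).coeff (2 * k + 1) = b.coeff k := by
  rw [coeff_add, coeff_X_mul, coeff_expand_mul' two_pos, coeff_expand two_pos, if_neg (by omega),
    zero_add]

theorem expand_two_add_X_mul_expand_two_eq_zero {a b : R[X]}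
    (h : expand R 2 a + X * expand R 2 b = 0) : a = 0 ∧ b = 0 := by
  constructor <;> ext k
  · rw [← coeff_expand_two_add_X_mul_expand_two_mul a b, h]; rfl
  · rw [← coeff_expand_two_add_X_mul_expand_two_mul_add_one a b, h]; rfl

theorem exists_eq_expand_two_add_X_mul_expand_two (s : R[X]) :
    ∃ a b : R[X], s = expand R 2 a + X * expand R 2 b := by
  induction s using Polynomial.induction_on' with
  | add p q hp hq =>
    obtain ⟨a₁, b₁, rfl⟩ := hp
    obtain ⟨a₂, b₂, rfl⟩ := hq
    exact ⟨a₁ + a₂, b₁ + b₂, by simp only [map_add]; ring⟩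
  | monomial n c =>
    obtain ⟨m, rfl | rfl⟩ := Nat.even_or_odd' n
    · exact ⟨monomial m c, 0, by simp [mul_comm]⟩
    · exact ⟨0, monomial m c, by simp [X_mul_monomial, add_comm, mul_comm]⟩

end Polynomial

namespace WhitneyUmbrella

open Polynomial

variable (k : Type*) [Field k]

abbrev P := MvPolynomial (Fin 3) k

noncomputable section

def relation : P k := MvPolynomial.X 1 ^ 2 - MvPolynomial.X 0 * MvPolynomial.X 2 ^ 2

abbrev R := P k ⧸ Ideal.span {relation k}

-- The normalization `k[y][u]` of `R`; the outer variable is `u`.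
abbrev S := k[X][X]

def u : S k := X

def y : S k := C X

variable {k}

abbrev mk : P k →+* R k := Ideal.Quotient.mk _

def param : P k →ₐ[k] S k := MvPolynomial.aeval ![u k ^ 2, u k * y k, y k]

@[simp] lemma param_X_zero : param (MvPolynomial.X 0) = u k ^ 2 := by simp [param]
@[simp] lemma param_X_one : param (MvPolynomial.X 1) = u k * y k := by simp [param]
@[simp] lemma param_X_two : param (MvPolynomial.X 2) = y k := by simp [param]

lemma param_relation : param (relation k) = 0 := by
  simp [relation]; ring

def toP : S k →+* P k :=
  eval₂RingHom (eval₂RingHom MvPolynomial.C (MvPolynomial.X 2)) (MvPolynomial.X 0)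

lemma param_toP (s : S k) : param (toP s) = expand _ 2 s := by
  suffices (param (k := k) : P k →+* S k).comp toP = (expand k[X] 2 : S k →ₐ[k[X]] S k) from
    RingHom.congr_fun this s
  have hC : ((param (k := k) : P k →+* S k).comp toP).comp C = C :=
    Polynomial.ringHom_ext (fun c => by simp [toP]) (by simp [toP, y])
  exact Polynomial.ringHom_ext (fun a => by simpa using RingHom.congr_fun hC a) (by simp [toP, u])

def incl : R k →+* S k :=
  Ideal.Quotient.lift _ (param (k := k) : P k →+* S k) fun a ha => by
    obtain ⟨c, rfl⟩ := Ideal.mem_span_singleton'.mp ha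
    simp [param_relation]

lemma exists_eq_mk_toP_add_X_mul (p : P k) :
    ∃ a b : S k, mk p = mk (toP a) + mk (MvPolynomial.X 1) * mk (toP b) := by
  induction p using MvPolynomial.induction_on with
  | C c => exact ⟨C (C c), 0, by simp [toP]⟩
  | add p q hp hq =>
    obtain ⟨a₁, b₁, h₁⟩ := hp
    obtain ⟨a₂, b₂, h₂⟩ := hq
    exact ⟨a₁ + a₂, b₁ + b₂, by rw [map_add, h₁, h₂]; simp only [map_add]; ring⟩
  | mul_X p i hp =>
    obtain ⟨a, b, hab⟩ := hp
    have hu : toP (u k) = MvPolynomial.X 0 := by simp [toP, u]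
    have hy : toP (y k) = MvPolynomial.X 2 := by simp [toP, y]
    obtain rfl | rfl | rfl : i = 0 ∨ i = 1 ∨ i = 2 := by fin_cases i <;> simp
    · exact ⟨a * u k, b * u k, by simp only [map_mul, hab, hu]; ring⟩
    · refine ⟨b * u k * y k ^ 2, a, ?_⟩
      have hrel : mk (relation k) = 0 :=
        Ideal.Quotient.eq_zero_iff_mem.mpr (Ideal.subset_span rfl)
      simp only [relation, map_sub, map_mul, map_pow, sub_eq_zero] at hrel
      simp only [map_mul, map_pow, hab, hu, hy]
      linear_combination mk (toP b) * hrel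
    · exact ⟨a * y k, b * y k, by simp only [map_mul, hab, hy]; ring⟩

lemma expand_y : expand _ 2 (y k) = y k := by simp [y]

lemma incl_injective : Function.Injective (incl (k := k)) := by
  refine (injective_iff_map_eq_zero _).mpr fun r hr => ?_
  obtain ⟨p, rfl⟩ := Ideal.Quotient.mk_surjective r
  obtain ⟨a, b, hab⟩ := exists_eq_mk_toP_add_X_mul p
  -- `param (toP a)` is even in `u`, while `param (X 1 * toP b) = u * expand (y * b)` is odd.
  change incl (mk p) = 0 at hr
  rw [hab, map_add, map_mul] at hr
  change param (toP a) + param (MvPolynomial.X 1) * param (toP b) = 0 at hr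
  rw [param_X_one, param_toP, param_toP, mul_assoc, ← expand_y, ← map_mul, u] at hr
  obtain ⟨rfl, hb⟩ := expand_two_add_X_mul_expand_two_eq_zero hr
  obtain rfl : b = 0 := by simpa [y] using hb
  simp [hab]

instance : Algebra (R k) (S k) := incl.toAlgebra

lemma algebraMap_mk (p : P k) : algebraMap (R k) (S k) (mk p) = param p := rfl

lemma exists_mul_y_pow_eq_algebraMap (s : S k) :
    ∃ (n : ℕ) (r : R k), s * y k ^ n = algebraMap (R k) (S k) r := by
  induction s using Polynomial.induction_on' with
  | add p q hp hq =>
    obtain ⟨n₁, r₁, h₁⟩ := hp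
    obtain ⟨n₂, r₂, h₂⟩ := hq
    refine ⟨n₁ + n₂, r₁ * mk (MvPolynomial.X 2) ^ n₂ + r₂ * mk (MvPolynomial.X 2) ^ n₁, ?_⟩
    simp only [map_add, map_mul, map_pow, ← h₁, ← h₂, algebraMap_mk, param_X_two]
    ring
  | monomial n a =>
    refine ⟨n, mk (toP (C a) * MvPolynomial.X 1 ^ n), ?_⟩
    simp only [algebraMap_mk, map_mul, map_pow, param_toP, param_X_one, expand_C, u,
      ← C_mul_X_pow_eq_monomial]
    ring

lemma injective_algebraMap_fractionRing :
    Function.Injective (algebraMap (R k) (FractionRing (S k))) := by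
  rw [IsScalarTower.algebraMap_eq (R k) (S k)]
  exact (IsFractionRing.injective (S k) _).comp incl_injective

instance : IsFractionRing (R k) (FractionRing (S k)) :=
  have : FaithfulSMul (R k) (FractionRing (S k)) :=
    (faithfulSMul_iff_algebraMap_injective _ _).mpr injective_algebraMap_fractionRing
  IsFractionRing.of_field _ _ fun z => by
    obtain ⟨a, b, hb, rfl⟩ := IsFractionRing.div_surjective (A := S k) z
    obtain ⟨m, p, hp⟩ := exists_mul_y_pow_eq_algebraMap a
    obtain ⟨n, q, hq⟩ := exists_mul_y_pow_eq_algebraMap b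
    refine ⟨p * mk (MvPolynomial.X 2) ^ n, q * mk (MvPolynomial.X 2) ^ m, ?_⟩
    have hy : algebraMap (S k) (FractionRing (S k)) (y k) ≠ 0 := by simp [y]
    have hb' : algebraMap (S k) (FractionRing (S k)) b ≠ 0 := by
      simpa using nonZeroDivisors.ne_zero hb
    simp only [IsScalarTower.algebraMap_apply (R k) (S k) (FractionRing (S k)), map_mul, map_pow,
      ← hp, ← hq, algebraMap_mk, param_X_two]
    field_simp

def evalYZero : S k →ₐ[k] k[X] := mapAlgHom (aeval 0)

@[simp] lemma evalYZero_map_C (h : k[X]) : evalYZero (h.map C) = h := by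
  ext n
  simp [evalYZero]

lemma evalYZero_u_mul_expand (h : k[X]) :
    evalYZero (u k * expand _ 2 (h.map C)) = X * expand _ 2 h := by
  rw [map_mul, show evalYZero (expand _ 2 (h.map C)) = expand _ 2 (evalYZero (h.map C)) from
    map_expand, evalYZero_map_C]
  simp [evalYZero, u]

lemma evalYZero_param (p : P k) :
    evalYZero (param p) = expand _ 2 (MvPolynomial.aeval ![X, 0, 0] p) := by
  suffices evalYZero.comp param = (expand _ 2).comp (MvPolynomial.aeval ![X, 0, 0]) from
    AlgHom.congr_fun this p
  ext i
  fin_cases i <;> simp [evalYZero, param, u, y]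

lemma exists_eq_algebraMap_add_u_mul (s : S k) :
    ∃ (r : R k) (h : k[X]), s = algebraMap (R k) (S k) r + u k * expand _ 2 (h.map C) := by
  obtain ⟨a, b, rfl⟩ := exists_eq_expand_two_add_X_mul_expand_two s
  have hdvd : y k ∣ b - (evalYZero b).map C := by
    refine C_dvd_iff_dvd_coeff _ _ |>.mpr fun i => ?_
    simpa [evalYZero, coeff_zero_eq_aeval_zero] using X_dvd_sub_C (p := b.coeff i)
  obtain ⟨b₂, hb₂⟩ := hdvd
  refine ⟨mk (toP a + MvPolynomial.X 1 * toP b₂), evalYZero b, ?_⟩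
  have hb : b = y k * b₂ + (evalYZero b).map C := by linear_combination hb₂
  conv_lhs => rw [hb]
  simp only [algebraMap_mk, map_add, map_mul, param_toP, param_X_one, expand_y, u]
  ring

lemma eq_zero_of_evalYZero_eq_X_mul_expand {B : Type*} [CommRing B] {f : R k →+* B}
    (hf : InducesResidueFieldIsos f) {β : B →+* S k} (hβ : β.comp f = algebraMap (R k) (S k))
    {b : B} {h : k[X]} (hb : evalYZero (β b) = X * expand _ 2 h) : h = 0 := by
  by_contra hh
  let π : B →+* k[X] := (evalYZero (k := k) : S k →+* k[X]).comp β
  have hπf (r : R k) : ∃ a, π (f r) = expand _ 2 a := by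
    obtain ⟨p, rfl⟩ := Ideal.Quotient.mk_surjective r
    exact ⟨_, (congrArg evalYZero (RingHom.congr_fun hβ _)).trans (evalYZero_param p)⟩
  let c : R k := mk (aeval (MvPolynomial.X 0) h)
  have hc : π (f c) = expand _ 2 h := by
    simp only [π, RingHom.comp_apply, ← RingHom.comp_apply β f, hβ, c, algebraMap_mk]
    change evalYZero (param (aeval (MvPolynomial.X 0) h)) = _
    rw [evalYZero_param, ← aeval_algHom_apply]
    simp
  have hexp : expand _ 2 h ≠ 0 := (expand_eq_zero two_pos).not.mpr hh
  -- In the residue field at `ker π`, `b / c` is the class of `u`; classes coming from `R` are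
  -- quotients of polynomials in `u²`.
  have := RingHom.ker_isPrime π
  obtain ⟨r, s, hs, hrs⟩ :=
    hf.exists_mul_sub_mul_mem (RingHom.ker π) b (c := f c) (by simpa [hc] using hexp)
  obtain ⟨ar, har⟩ := hπf r
  obtain ⟨as, has⟩ := hπf s
  rw [RingHom.mem_ker, map_sub, map_mul, map_mul, hc, har, has, sub_eq_zero] at hrs
  have hrs' : expand _ 2 (-ar) + X * expand _ 2 as = 0 := by
    refine mul_left_cancel₀ hexp ?_
    rw [show π b = _ from hb] at hrs
    rw [map_neg]
    linear_combination hrs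
  obtain ⟨-, rfl⟩ := expand_two_add_X_mul_expand_two_eq_zero hrs'
  exact hs (by simp [has])

end

end WhitneyUmbrella

open MvPolynomial in
/-- The ring `(ℤ/2ℤ)[t,x,y]/(x² − t·y²)` is seminormal
(here `t, x, y` are the variables `X 0, X 1, X 2`). -/
theorem statement10 :
    IsSeminormalRing
      (MvPolynomial (Fin 3) (ZMod 2) ⧸
        Ideal.span {(X 1 : MvPolynomial (Fin 3) (ZMod 2)) ^ 2 - X 0 * X 2 ^ 2}) := by
  show IsSeminormalRing (WhitneyUmbrella.R (ZMod 2))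
  open WhitneyUmbrella in
  intro B _ f hf hfin hbir _ hres
  obtain ⟨β, hβ, hβf⟩ :=
    hbir.exists_injective_lift_of_isIntegrallyClosed (S := S (ZMod 2))
      (K := FractionRing (S (ZMod 2))) hfin.to_isIntegral
  refine ⟨hf, fun b => ?_⟩
  obtain ⟨r, h, hrh⟩ := exists_eq_algebraMap_add_u_mul (β b)
  have hb : evalYZero (β (b - f r)) = Polynomial.X * Polynomial.expand _ 2 h := by
    rw [map_sub, ← RingHom.comp_apply β f, hβf, hrh, add_sub_cancel_left,
      evalYZero_u_mul_expand]
  obtain rfl := eq_zero_of_evalYZero_eq_X_mul_expand hres hβf hb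
  refine ⟨r, hβ ?_⟩
  rw [← RingHom.comp_apply β f, hβf, hrh]
  simp
end

section
/- There exists a seminormal reduced finitely generated algebra D over a field (Greco–Traverso's example, realized as a subring of (ℤ/11ℤ)[x,y,u,v,e,f]/(intersection of the ideals (u,v,e−1,f) and (x,y,e,f−1)) generated by x³+u, x²+v, y, u²−v³, x·y) such that some irreducible component of Spec D is not seminormal; that is, D is seminormal but the quotient of D by one of its minimal primes is not seminormal. -/
/-!
Write `k = ℤ/11ℤ`. By the Chinese remainder theorem the ambient ring is `k[x,y] × k[u,v]`, and `D`
is the fibre product of `k[x,y] → k[t]`, `(x,y) ↦ (t,0)`, and `k[u,v] → k[t]`, `(u,v) ↦ (t³,t²)`: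
a plane glued along a line to a second plane along a cuspidal cubic.

`D` is seminormal: a finite birational extension `B` of `D` embeds into the normalization
`k[x,y] × k[u,v]`, and the two induced maps `B → k[t]` agree on `D`. Since `Spec B → Spec D` is
injective and the residue fields agree, they agree on all of `B`, so `B = D`.

The first projection has a minimal prime of `D` as kernel, and its image is the ring of `p ∈ k[x,y]`
with `p(t,0) ∈ k[t²,t³]`. It contains `x²` and `x³` but not `x`, and `k[x,y]` is generated over it
by `x`, so adjoining `x` is a nontrivial finite birational extension that is bijective on spectra
and on residue fields.
-/

universe u v

set_option synthInstance.maxHeartbeats 1000000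
set_option maxHeartbeats 1000000

open MvPolynomial

/-- The ideal of Greco–Traverso's example: the intersection of `(u,v,e-1,f)` and
`(x,y,e,f-1)` inside `(ℤ/11ℤ)[x,y,u,v,e,f]`, with variables
`x = X 0, y = X 1, u = X 2, v = X 3, e = X 4, f = X 5`. -/
noncomputable def gtIdeal : Ideal (MvPolynomial (Fin 6) (ZMod 11)) :=
  Ideal.span {X 2, X 3, X 4 - 1, X 5} ⊓ Ideal.span {X 0, X 1, X 4, X 5 - 1}

/-- The ambient ring `A` of Greco–Traverso's example. -/
noncomputable abbrev GTAmbient : Type := MvPolynomial (Fin 6) (ZMod 11) ⧸ gtIdeal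

/-- The map `E = (ℤ/11ℤ)[z₁,…,z₅] → A` sending `z₁,…,z₅` to
`x³+u, x²+v, y, u²−v³, x·y`. -/
noncomputable def gtMap : MvPolynomial (Fin 5) (ZMod 11) →ₐ[ZMod 11] GTAmbient :=
  aeval (fun i => Ideal.Quotient.mk gtIdeal
    (![X 0 ^ 3 + X 2, X 0 ^ 2 + X 3, X 1, X 2 ^ 2 - X 3 ^ 3, X 0 * X 1] i))

/-- Greco–Traverso's ring `D`, the image of `E` in `A`, realized as `E/ker`. -/
noncomputable abbrev GTRing : Type :=
  MvPolynomial (Fin 5) (ZMod 11) ⧸ RingHom.ker gtMap.toRingHom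

section ResidueField

variable {A B : Type*} [CommRing A] [CommRing B] {f : A →+* B}

theorem InducesResidueFieldIsos.exists_mul_sub_mem (hres : InducesResidueFieldIsos f)
    (q : Ideal B) [q.IsPrime] (b : B) : ∃ a s : A, s ∉ q.comap f ∧ b * f s - f a ∈ q := by
  obtain ⟨z, hz⟩ := (hres q).2 (algebraMap B q.ResidueField b)
  obtain ⟨a', s', hs', rfl⟩ := IsFractionRing.div_surjective (A := A ⧸ q.comap f) z
  obtain ⟨a, rfl⟩ := Ideal.Quotient.mk_surjective a'
  obtain ⟨s, rfl⟩ := Ideal.Quotient.mk_surjective s'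
  have hs : s ∉ q.comap f := by
    rw [← Ideal.Quotient.eq_zero_iff_mem]
    exact nonZeroDivisors.ne_zero hs'
  refine ⟨a, s, hs, ?_⟩
  have hfs : algebraMap B q.ResidueField (f s) ≠ 0 := by
    rwa [Ne, Ideal.algebraMap_residueField_eq_zero]
  change Ideal.ResidueField.map _ q f rfl _ = _ at hz
  rw [map_div₀, Ideal.algebraMap_quotient_residueField_mk,
    Ideal.algebraMap_quotient_residueField_mk, Ideal.ResidueField.map_algebraMap,
    Ideal.ResidueField.map_algebraMap, div_eq_iff hfs] at hz
  rw [← Ideal.algebraMap_residueField_eq_zero, map_sub, map_mul, ← hz, sub_self]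

theorem RingHom.eq_of_comp_eq_of_injective_comap {T : Type*} [CommRing T] [IsDomain T]
    (hspec : Function.Injective (PrimeSpectrum.comap f)) (hres : InducesResidueFieldIsos f)
    {Θ₁ Θ₂ : B →+* T} (h : Θ₁.comp f = Θ₂.comp f) : Θ₁ = Θ₂ := by
  have hker : RingHom.ker Θ₁ = RingHom.ker Θ₂ := by
    have := @hspec ⟨_, RingHom.ker_isPrime Θ₁⟩ ⟨_, RingHom.ker_isPrime Θ₂⟩
      (PrimeSpectrum.ext (by simp only [PrimeSpectrum.comap_asIdeal, RingHom.comap_ker, h]))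
    exact congrArg PrimeSpectrum.asIdeal this
  ext b
  have : (RingHom.ker Θ₁).IsPrime := RingHom.ker_isPrime Θ₁
  obtain ⟨a, s, hs, hmem⟩ := hres.exists_mul_sub_mem (RingHom.ker Θ₁) b
  have hf (x : A) : Θ₁ (f x) = Θ₂ (f x) := congr($h x)
  have hs₁ : Θ₁ (f s) ≠ 0 := hs
  have h₁ : Θ₁ b * Θ₁ (f s) = Θ₁ (f a) := by
    simpa [sub_eq_zero] using RingHom.mem_ker.mp hmem
  have h₂ : Θ₂ b * Θ₂ (f s) = Θ₂ (f a) := by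
    rw [hker] at hmem
    simpa [sub_eq_zero] using RingHom.mem_ker.mp hmem
  simp only [hf] at hs₁ h₁
  exact mul_right_cancel₀ hs₁ (h₁.trans h₂.symm)

end ResidueField

theorem IsBirationalHom.exists_injective_comp_eq {A B : Type*} [CommRing A] [CommRing B]
    {f : A →+* B} (hbir : IsBirationalHom f) :
    ∃ j : B →+* FractionRing A, Function.Injective j ∧
      j.comp f = algebraMap A (FractionRing A) := by
  obtain ⟨hle, hbij⟩ := hbir
  set e := RingEquiv.ofBijective _ hbij
  refine ⟨e.symm.toRingHom.comp (algebraMap B (FractionRing B)),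
    e.symm.injective.comp (IsFractionRing.injective B _), ?_⟩
  ext a
  simp only [RingHom.comp_apply, RingEquiv.toRingHom_eq_coe, RingEquiv.coe_toRingHom]
  rw [e.symm_apply_eq, RingEquiv.ofBijective_apply, IsLocalization.map_eq]

section ProdFractionRing

variable {A R₁ R₂ : Type*} [CommRing A] [CommRing R₁] [CommRing R₂]

variable (R₁ R₂) in
noncomputable def prodFractionRingMap : R₁ × R₂ →+* FractionRing R₁ × FractionRing R₂ :=
  (algebraMap R₁ _).prodMap (algebraMap R₂ _)

theorem prodFractionRingMap_injective : Function.Injective (prodFractionRingMap R₁ R₂) :=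
  (IsFractionRing.injective R₁ _).prodMap (IsFractionRing.injective R₂ _)

theorem exists_injective_lift_fractionRing [IsDomain R₁] [IsDomain R₂] {g : A →+* R₁ × R₂}
    (hg : Function.Injective g)
    (hnzd : ∀ a ∈ nonZeroDivisors A, (g a).1 ≠ 0 ∧ (g a).2 ≠ 0) :
    ∃ L : FractionRing A →+* FractionRing R₁ × FractionRing R₂, Function.Injective L ∧
      L.comp (algebraMap A (FractionRing A)) = (prodFractionRingMap R₁ R₂).comp g := by
  have hunit (a : nonZeroDivisors A) : IsUnit ((prodFractionRingMap R₁ R₂).comp g a) := by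
    obtain ⟨h₁, h₂⟩ := hnzd a a.2
    exact Prod.isUnit_iff.mpr
      ⟨(IsFractionRing.to_map_ne_zero_of_mem_nonZeroDivisors
        (mem_nonZeroDivisors_of_ne_zero h₁)).isUnit,
       (IsFractionRing.to_map_ne_zero_of_mem_nonZeroDivisors
        (mem_nonZeroDivisors_of_ne_zero h₂)).isUnit⟩
  refine ⟨IsLocalization.lift hunit, ?_, IsLocalization.lift_comp hunit⟩
  rw [IsLocalization.lift_injective_iff]
  intro x y
  rw [(IsFractionRing.injective A _).eq_iff]
  exact (prodFractionRingMap_injective.comp hg).eq_iff.symm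

theorem mem_range_prodFractionRingMap_of_isIntegralElem [IsIntegrallyClosed R₁]
    [IsIntegrallyClosed R₂] {g : A →+* R₁ × R₂} {x : FractionRing R₁ × FractionRing R₂}
    (hx : ((prodFractionRingMap R₁ R₂).comp g).IsIntegralElem x) :
    x ∈ (prodFractionRingMap R₁ R₂).range := by
  have h₁ : IsIntegral R₁ x.1 :=
    (hx.map (RingHom.fst _ _)).of_comp (f := (RingHom.fst R₁ R₂).comp g)
  have h₂ : IsIntegral R₂ x.2 :=
    (hx.map (RingHom.snd _ _)).of_comp (f := (RingHom.snd R₁ R₂).comp g)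
  obtain ⟨y₁, hy₁⟩ := IsIntegrallyClosed.isIntegral_iff.mp h₁
  obtain ⟨y₂, hy₂⟩ := IsIntegrallyClosed.isIntegral_iff.mp h₂
  exact ⟨(y₁, y₂), Prod.ext hy₁ hy₂⟩

end ProdFractionRing

theorem RingHom.exists_comp_eq_of_forall_mem_range_s11 {R S B : Type*} [Ring R] [Ring S] [Ring B]
    {ι : R →+* S} (hι : Function.Injective ι) {J : B →+* S} (hJ : ∀ b, J b ∈ ι.range) :
    ∃ ρ : B →+* R, ι.comp ρ = J := by
  refine ⟨((RingEquiv.ofLeftInverse (Function.leftInverse_invFun hι)).symm : ι.range →+* R).comp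
    (J.codRestrict ι.range hJ), ?_⟩
  ext b
  simp [RingEquiv.ofLeftInverse_symm_apply, Function.invFun_eq (hJ b)]

theorem exists_injective_lift_of_finite_of_isBirationalHom {A B R₁ R₂ : Type*} [CommRing A]
    [CommRing B] [CommRing R₁] [IsDomain R₁] [IsIntegrallyClosed R₁] [CommRing R₂] [IsDomain R₂]
    [IsIntegrallyClosed R₂] {g : A →+* R₁ × R₂} (hg : Function.Injective g)
    (hnzd : ∀ a ∈ nonZeroDivisors A, (g a).1 ≠ 0 ∧ (g a).2 ≠ 0) {f : A →+* B}
    (hfin : f.Finite) (hbir : IsBirationalHom f) :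
    ∃ ρ : B →+* R₁ × R₂, Function.Injective ρ ∧ ρ.comp f = g := by
  obtain ⟨L, hL, hLg⟩ := exists_injective_lift_fractionRing hg hnzd
  obtain ⟨j, hj, hjf⟩ := hbir.exists_injective_comp_eq
  have hJf : (L.comp j).comp f = (prodFractionRingMap R₁ R₂).comp g := by
    rw [RingHom.comp_assoc, hjf, hLg]
  have hJ (b : B) : L.comp j b ∈ (prodFractionRingMap R₁ R₂).range :=
    mem_range_prodFractionRingMap_of_isIntegralElem (hJf ▸ (hfin.to_isIntegral b).map (L.comp j))
  obtain ⟨ρ, hρ⟩ := RingHom.exists_comp_eq_of_forall_mem_range_s11 prodFractionRingMap_injective hJ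
  refine ⟨ρ, .of_comp (f := prodFractionRingMap R₁ R₂) ?_, ?_⟩
  · rw [← RingHom.coe_comp, hρ]
    exact hL.comp hj
  · apply RingHom.ext fun a => prodFractionRingMap_injective ?_
    rw [← RingHom.comp_apply, ← RingHom.comp_apply, ← RingHom.comp_assoc, hρ, hJf]

theorem RingHom.ker_mem_minimalPrimes_of_mul_eq_zero {A R : Type*} [CommRing A] [CommRing R]
    [IsDomain R] (π : A →+* R) {w : A} (hw : π w ≠ 0) (hann : ∀ z ∈ RingHom.ker π, z * w = 0) :
    RingHom.ker π ∈ minimalPrimes A := by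
  refine ⟨⟨RingHom.ker_isPrime π, bot_le⟩, fun r ⟨hr, _⟩ hle z hz => ?_⟩
  have hzw : z * w ∈ r := hann z hz ▸ r.zero_mem
  exact (hr.mem_or_mem hzw).resolve_right fun h => hw (hle h)

section Pullback

variable {A R₁ R₂ T : Type*} [CommRing A] [CommRing R₁] [CommRing R₂] [CommRing T]
  {ψ₁ : R₁ →+* T} {ψ₂ : R₂ →+* T} {g : A →+* R₁ × R₂}

theorem mem_ringPullback {x : R₁ × R₂} : x ∈ ringPullback ψ₁ ψ₂ ↔ ψ₁ x.1 = ψ₂ x.2 := Iff.rfl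

theorem mk_zero_mem_range_of_mem_ker (hrange : g.range = ringPullback ψ₁ ψ₂) {k : R₁}
    (hk : k ∈ RingHom.ker ψ₁) : ((k, 0) : R₁ × R₂) ∈ g.range :=
  hrange ▸ mem_ringPullback.mpr (by simpa using hk)

theorem zero_mk_mem_range_of_mem_ker (hrange : g.range = ringPullback ψ₁ ψ₂) {k : R₂}
    (hk : k ∈ RingHom.ker ψ₂) : ((0, k) : R₁ × R₂) ∈ g.range :=
  hrange ▸ mem_ringPullback.mpr (by simpa using hk.symm)

theorem map_fst_ne_zero_and_map_snd_ne_zero (hg : Function.Injective g)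
    (hrange : g.range = ringPullback ψ₁ ψ₂) (h₁ : RingHom.ker ψ₁ ≠ ⊥) (h₂ : RingHom.ker ψ₂ ≠ ⊥)
    {a : A} (ha : a ∈ nonZeroDivisors A) : (g a).1 ≠ 0 ∧ (g a).2 ≠ 0 := by
  obtain ⟨k₁, hk₁, hk₁0⟩ := Submodule.exists_mem_ne_zero_of_ne_bot h₁
  obtain ⟨k₂, hk₂, hk₂0⟩ := Submodule.exists_mem_ne_zero_of_ne_bot h₂
  obtain ⟨w₁, hw₁⟩ := mk_zero_mem_range_of_mem_ker hrange hk₁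
  obtain ⟨w₂, hw₂⟩ := zero_mk_mem_range_of_mem_ker hrange hk₂
  constructor
  · intro h0
    have : w₁ = 0 := ha.2 w₁ (hg (by simp [hw₁, Prod.ext_iff, h0]))
    exact hk₁0 (by simpa [this] using hw₁.symm)
  · intro h0
    have : w₂ = 0 := ha.2 w₂ (hg (by simp [hw₂, Prod.ext_iff, h0]))
    exact hk₂0 (by simpa [this] using hw₂.symm)

theorem range_fst_comp_eq_comap_range (hrange : g.range = ringPullback ψ₁ ψ₂) :
    ((RingHom.fst R₁ R₂).comp g).range = ψ₂.range.comap ψ₁ := by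
  ext x
  constructor
  · rintro ⟨a, rfl⟩
    exact ⟨(g a).2, (mem_ringPullback.mp (hrange ▸ g.mem_range_self a)).symm⟩
  · rintro ⟨y, hy⟩
    obtain ⟨a, ha⟩ : (x, y) ∈ g.range := hrange ▸ mem_ringPullback.mpr hy.symm
    exact ⟨a, by simp [ha]⟩

theorem ker_fst_comp_mem_minimalPrimes [IsDomain R₁] (hg : Function.Injective g)
    (hrange : g.range = ringPullback ψ₁ ψ₂) (h₁ : RingHom.ker ψ₁ ≠ ⊥) :
    RingHom.ker ((RingHom.fst R₁ R₂).comp g) ∈ minimalPrimes A := by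
  obtain ⟨k, hk, hk0⟩ := Submodule.exists_mem_ne_zero_of_ne_bot h₁
  obtain ⟨w, hw⟩ := mk_zero_mem_range_of_mem_ker hrange hk
  refine RingHom.ker_mem_minimalPrimes_of_mul_eq_zero _ (w := w) (by simpa [hw]) fun z hz => ?_
  have hz : (g z).1 = 0 := hz
  exact hg (by simp [hw, Prod.ext_iff, hz])

theorem isSeminormalRing_of_range_eq_ringPullback {A R₁ R₂ : Type u} [CommRing A] [CommRing R₁]
    [IsDomain R₁] [IsIntegrallyClosed R₁] [CommRing R₂] [IsDomain R₂] [IsIntegrallyClosed R₂]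
    [IsDomain T] {ψ₁ : R₁ →+* T} {ψ₂ : R₂ →+* T} (h₁ : RingHom.ker ψ₁ ≠ ⊥)
    (h₂ : RingHom.ker ψ₂ ≠ ⊥) {g : A →+* R₁ × R₂} (hg : Function.Injective g)
    (hrange : g.range = ringPullback ψ₁ ψ₂) : IsSeminormalRing A := by
  intro B _ f hinj hfin hbir hspec hres
  obtain ⟨ρ, hρ, hρf⟩ := exists_injective_lift_of_finite_of_isBirationalHom hg
    (fun a ha => map_fst_ne_zero_and_map_snd_ne_zero hg hrange h₁ h₂ ha) hfin hbir
  have hΘ : (ψ₁.comp ((RingHom.fst R₁ R₂).comp ρ)) = ψ₂.comp ((RingHom.snd R₁ R₂).comp ρ) := by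
    refine RingHom.eq_of_comp_eq_of_injective_comap hspec.1 hres ?_
    simp only [RingHom.comp_assoc, hρf]
    ext a
    exact mem_ringPullback.mp (hrange ▸ g.mem_range_self a)
  refine ⟨hinj, fun b => ?_⟩
  obtain ⟨a, ha⟩ : ρ b ∈ g.range := hrange ▸ mem_ringPullback.mpr congr($hΘ b)
  exact ⟨a, hρ (by rw [← ha, ← hρf, RingHom.comp_apply])⟩

end Pullback

theorem Subfield.mem_of_sq_mem_of_cube_mem {F : Type*} [Field F] (S : Subfield F) {y : F}
    (h2 : y ^ 2 ∈ S) (h3 : y ^ 3 ∈ S) : y ∈ S := by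
  rcases eq_or_ne y 0 with rfl | hy
  · exact S.zero_mem
  · have : y = y ^ 3 / y ^ 2 := by field_simp
    rw [this]
    exact S.div_mem h3 h2

/-- `R = A[x]` with `x², x³ ∈ A` (Swan's elementary subintegral extensions), where `A` is
identified with its image under `g`. -/
structure IsElementarySubintegral {A R : Type*} [CommRing A] [CommRing R] (g : A →+* R) (x : R) :
    Prop where
  sq_mem : x ^ 2 ∈ g.range
  cube_mem : x ^ 3 ∈ g.range
  eq_add_mul : ∀ r, ∃ a ∈ g.range, ∃ b ∈ g.range, r = a + b * x

namespace IsElementarySubintegral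

variable {A R : Type*} [CommRing A] [CommRing R] {g : A →+* R} {x : R}

theorem finite (h : IsElementarySubintegral g x) : g.Finite := by
  classical
  let := g.toAlgebra
  refine ⟨⟨{1, x}, eq_top_iff.mpr fun r _ => ?_⟩⟩
  obtain ⟨-, ⟨a, rfl⟩, -, ⟨b, rfl⟩, rfl⟩ := h.eq_add_mul r
  have hr : g a + g b * x = a • (1 : R) + b • x := by
    simp only [Algebra.smul_def, mul_one]
    rfl
  rw [hr]
  exact add_mem (Submodule.smul_mem _ _ (Submodule.subset_span (by simp)))
    (Submodule.smul_mem _ _ (Submodule.subset_span (by simp)))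

theorem map_mem (h : IsElementarySubintegral g x) {F : Type*} [Field F] (S : Subfield F)
    (φ : R →+* F) (hA : ∀ a, φ (g a) ∈ S) (r : R) : φ r ∈ S := by
  have hpow {n : ℕ} (hn : x ^ n ∈ g.range) : φ x ^ n ∈ S := by
    obtain ⟨a, ha⟩ := hn
    rw [← map_pow, ← ha]
    exact hA a
  have hx : φ x ∈ S := S.mem_of_sq_mem_of_cube_mem (hpow h.sq_mem) (hpow h.cube_mem)
  obtain ⟨-, ⟨a, rfl⟩, -, ⟨b, rfl⟩, rfl⟩ := h.eq_add_mul r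
  rw [map_add, map_mul]
  exact S.add_mem (hA a) (S.mul_mem (hA b) hx)

theorem isBirationalHom [IsDomain R] (h : IsElementarySubintegral g x)
    (hg : Function.Injective g) : IsBirationalHom g := by
  have : IsDomain A := hg.isDomain g
  have hle := nonZeroDivisors_le_comap_nonZeroDivisors_of_injective g hg
  set φ := (IsLocalization.map (M := nonZeroDivisors A) (T := nonZeroDivisors R)
    (FractionRing R) g hle : FractionRing A →+* FractionRing R)
  have hR (r : R) : algebraMap R (FractionRing R) r ∈ φ.fieldRange :=
    h.map_mem φ.fieldRange _ (fun a => ⟨algebraMap A _ a, IsLocalization.map_eq hle a⟩) r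
  refine ⟨hle, φ.injective, fun z => ?_⟩
  obtain ⟨a, b, -, rfl⟩ := IsFractionRing.div_surjective (A := R) z
  exact φ.fieldRange.div_mem (hR a) (hR b)

theorem comap_injective (h : IsElementarySubintegral g x) :
    Function.Injective (PrimeSpectrum.comap g) := by
  suffices hle : ∀ P Q : PrimeSpectrum R, P.comap g = Q.comap g → P.asIdeal ≤ Q.asIdeal from
    fun P Q hPQ => PrimeSpectrum.ext ((hle P Q hPQ).antisymm (hle Q P hPQ.symm))
  intro P Q hPQ r hr
  have hA {a : A} (ha : g a ∈ P.asIdeal) : g a ∈ Q.asIdeal :=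
    show a ∈ (Q.comap g).asIdeal from hPQ ▸ ha
  obtain ⟨c, hc⟩ := h.sq_mem
  obtain ⟨d, hd⟩ := h.cube_mem
  obtain ⟨-, ⟨a, rfl⟩, -, ⟨b, rfl⟩, rfl⟩ := h.eq_add_mul r
  by_cases hxP : x ∈ P.asIdeal
  · have hxQ : x ∈ Q.asIdeal :=
      Q.2.mem_of_pow_mem 2 (hc ▸ hA (hc ▸ P.asIdeal.pow_mem_of_mem hxP 2 two_pos))
    have haP : g a ∈ P.asIdeal := by
      simpa using P.asIdeal.sub_mem hr (P.asIdeal.mul_mem_left (g b) hxP)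
    exact Q.asIdeal.add_mem (hA haP) (Q.asIdeal.mul_mem_left _ hxQ)
  · have hsq : x ^ 2 * (g a + g b * x) = g (c * a + b * d) := by
      rw [map_add, map_mul, map_mul, hc, hd]
      ring
    have hcQ : g c ∉ Q.asIdeal := fun hcQ => hxP (P.2.mem_of_pow_mem 2 (hc ▸
      show c ∈ (P.comap g).asIdeal from hPQ ▸ hcQ))
    have hmem : x ^ 2 * (g a + g b * x) ∈ Q.asIdeal :=
      hsq ▸ hA (hsq ▸ P.asIdeal.mul_mem_left _ hr)
    exact (Q.2.mem_or_mem hmem).resolve_left (hc ▸ hcQ)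

theorem inducesResidueFieldIsos (h : IsElementarySubintegral g x) :
    InducesResidueFieldIsos g := by
  intro q _
  set F := Ideal.ResidueField.map (q.comap g) q g rfl
  have hR (r : R) : algebraMap R q.ResidueField r ∈ F.fieldRange :=
    h.map_mem F.fieldRange _
      (fun a => ⟨algebraMap A _ a, Ideal.ResidueField.map_algebraMap _ _ _ _ a⟩) r
  refine ⟨F.injective, fun z => ?_⟩
  obtain ⟨a, s, -, rfl⟩ := IsFractionRing.div_surjective (A := R ⧸ q) z
  obtain ⟨a, rfl⟩ := Ideal.Quotient.mk_surjective a
  obtain ⟨s, rfl⟩ := Ideal.Quotient.mk_surjective s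
  simp only [Ideal.algebraMap_quotient_residueField_mk]
  exact F.fieldRange.div_mem (hR a) (hR s)

theorem not_isSeminormalRing {A R : Type u} [CommRing A] [CommRing R] [IsDomain R]
    {g : A →+* R} {x : R} (h : IsElementarySubintegral g x) (hg : Function.Injective g)
    (hx : x ∉ g.range) : ¬ IsSeminormalRing A := fun hA =>
  hx ((hA R g hg h.finite (h.isBirationalHom hg)
    ⟨h.comap_injective, h.finite.to_isIntegral.comap_surjective hg⟩
    h.inducesResidueFieldIsos).2 x)

end IsElementarySubintegral

theorem MvPolynomial.ker_eq_of_forall_X_sub_mem {σ R S : Type*} [CommRing R] [CommRing S]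
    [Algebra R S] (φ : MvPolynomial σ R →ₐ[R] S) (s : S →ₐ[R] MvPolynomial σ R)
    {I : Ideal (MvPolynomial σ R)} (hX : ∀ i, X i - s (φ (X i)) ∈ I)
    (hI : I ≤ RingHom.ker φ) : RingHom.ker φ = I := by
  refine le_antisymm (fun p hp => ?_) hI
  have hs : (Ideal.Quotient.mkₐ R I).comp (s.comp φ) = Ideal.Quotient.mkₐ R I :=
    MvPolynomial.algHom_ext fun i => (Ideal.Quotient.eq.mpr (hX i)).symm
  have := congr($hs p)
  simp only [AlgHom.comp_apply, show φ p = 0 from hp, map_zero,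
    Ideal.Quotient.mkₐ_eq_mk] at this
  exact Ideal.Quotient.eq_zero_iff_mem.mp this.symm

theorem RingHom.range_kerLift {R S : Type*} [CommRing R] [CommRing S] (f : R →+* S) :
    (RingHom.kerLift f).range = f.range := by
  ext y
  constructor
  · rintro ⟨a, rfl⟩
    obtain ⟨r, rfl⟩ := Ideal.Quotient.mk_surjective a
    exact ⟨r, (RingHom.kerLift_mk f r).symm⟩
  · rintro ⟨r, rfl⟩
    exact ⟨Ideal.Quotient.mk _ r, RingHom.kerLift_mk f r⟩

namespace GrecoTraverso

local instance : Fact (Nat.Prime 11) := ⟨by norm_num⟩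

abbrev P2 : Type := MvPolynomial (Fin 2) (ZMod 11)

noncomputable def toLine : P2 →ₐ[ZMod 11] Polynomial (ZMod 11) := aeval ![Polynomial.X, 0]

noncomputable def toCusp : P2 →ₐ[ZMod 11] Polynomial (ZMod 11) :=
  aeval ![Polynomial.X ^ 3, Polynomial.X ^ 2]

@[simp] theorem toLine_X_zero : toLine (X 0) = Polynomial.X := by simp [toLine]
@[simp] theorem toLine_X_one : toLine (X 1) = 0 := by simp [toLine]
@[simp] theorem toCusp_X_zero : toCusp (X 0) = Polynomial.X ^ 3 := by simp [toCusp]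
@[simp] theorem toCusp_X_one : toCusp (X 1) = Polynomial.X ^ 2 := by simp [toCusp]

theorem ker_toLine_ne_bot : RingHom.ker (toLine : P2 →+* Polynomial (ZMod 11)) ≠ ⊥ :=
  (Submodule.ne_bot_iff _).mpr ⟨X 1, by simp, X_ne_zero 1⟩

theorem ker_toCusp_ne_bot : RingHom.ker (toCusp : P2 →+* Polynomial (ZMod 11)) ≠ ⊥ := by
  refine (Submodule.ne_bot_iff _).mpr ⟨X 0 ^ 2 - X 1 ^ 3, by simp [← pow_mul], fun h => ?_⟩
  simpa using congr(toLine $h)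

theorem coeff_one_toCusp (q : P2) : (toCusp q).coeff 1 = 0 := by
  induction q using MvPolynomial.induction_on with
  | C a => simp [toCusp]
  | add p q hp hq => rw [map_add, Polynomial.coeff_add, hp, hq, add_zero]
  | mul_X p n hp => fin_cases n <;> simp [Polynomial.coeff_mul_X_pow']

theorem X_pow_mem_range_toCusp {n : ℕ} (hn : n ≠ 1) : Polynomial.X ^ n ∈ toCusp.range := by
  obtain ⟨m, rfl | rfl⟩ := Nat.even_or_odd' n
  · exact ⟨X 1 ^ m, by simp [← pow_mul]⟩
  · obtain ⟨m, rfl⟩ : ∃ k, m = k + 1 := Nat.exists_eq_add_one.mpr (by omega)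
    refine ⟨X 0 * X 1 ^ m, ?_⟩
    change toCusp (X 0 * X 1 ^ m) = _
    rw [map_mul, map_pow, toCusp_X_zero, toCusp_X_one, ← pow_mul, ← pow_add]
    ring_nf

theorem mem_range_toCusp_of_coeff_one {P : Polynomial (ZMod 11)} (hP : P.coeff 1 = 0) :
    P ∈ toCusp.range := by
  rw [P.as_sum_support_C_mul_X_pow]
  refine Subalgebra.sum_mem _ fun n hn => ?_
  rw [Polynomial.C_mul']
  refine Subalgebra.smul_mem _ (X_pow_mem_range_toCusp fun h => ?_) _
  exact Polynomial.mem_support_iff.mp hn (h ▸ hP)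

theorem exists_eq_aeval_toLine_add_X_one_mul (p : P2) :
    ∃ h, p = Polynomial.aeval (X 0) (toLine p) + X 1 * h := by
  induction p using MvPolynomial.induction_on with
  | C a => exact ⟨0, by simp [toLine]⟩
  | add p q hp hq =>
    obtain ⟨h₁, hp⟩ := hp
    obtain ⟨h₂, hq⟩ := hq
    exact ⟨h₁ + h₂, by rw [map_add, map_add]; nth_rw 1 [hp, hq]; ring⟩
  | mul_X p n hp =>
    obtain ⟨h, hp⟩ := hp
    fin_cases n
    · refine ⟨h * X 0, ?_⟩
      rw [Fin.zero_eta, map_mul, map_mul, toLine_X_zero, Polynomial.aeval_X]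
      nth_rw 1 [hp]
      ring
    · exact ⟨p, by simp [mul_comm]⟩

noncomputable def firstComponent : Subring P2 :=
  (toCusp : P2 →+* Polynomial (ZMod 11)).range.comap toLine

theorem X_zero_notMem_firstComponent : X 0 ∉ firstComponent := by
  rintro ⟨q, hq⟩
  have hq : toCusp q = Polynomial.X := by simpa using hq
  simpa [hq] using coeff_one_toCusp q

theorem isElementarySubintegral_X_zero {A : Type*} [CommRing A] {g : A →+* P2}
    (hg : g.range = firstComponent) : IsElementarySubintegral g (X 0) := by
  refine ⟨hg ▸ ⟨X 1, by simp⟩, hg ▸ ⟨X 0, by simp⟩, fun r => ?_⟩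
  rw [hg]
  set c := (toLine r).coeff 1
  refine ⟨r - C c * X 0, mem_range_toCusp_of_coeff_one ?_, C c, ⟨C c, by simp [toLine, toCusp]⟩,
    by ring⟩
  simp [c, Polynomial.coeff_C]

/-- The factor `e = 1` of the ambient ring; both factors are written in the variables of `P2`. -/
noncomputable def toFirst : MvPolynomial (Fin 6) (ZMod 11) →ₐ[ZMod 11] P2 :=
  aeval ![X 0, X 1, 0, 0, 1, 0]

noncomputable def toSecond : MvPolynomial (Fin 6) (ZMod 11) →ₐ[ZMod 11] P2 :=
  aeval ![0, 0, X 0, X 1, 0, 1]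

theorem ker_toFirst : RingHom.ker toFirst = Ideal.span {X 2, X 3, X 4 - 1, X 5} :=
  MvPolynomial.ker_eq_of_forall_X_sub_mem _ (aeval ![X 0, X 1])
    (fun i => by fin_cases i <;> simp [toFirst] <;> exact Ideal.subset_span (by simp))
    (Ideal.span_le.mpr (by simp [Set.insert_subset_iff, toFirst]))

theorem ker_toSecond : RingHom.ker toSecond = Ideal.span {X 0, X 1, X 4, X 5 - 1} :=
  MvPolynomial.ker_eq_of_forall_X_sub_mem _ (aeval ![X 2, X 3])
    (fun i => by fin_cases i <;> simp [toSecond] <;> exact Ideal.subset_span (by simp))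
    (Ideal.span_le.mpr (by simp [Set.insert_subset_iff, toSecond]))

theorem ker_toFirst_prod_toSecond : RingHom.ker (toFirst.prod toSecond) = gtIdeal := by
  rw [gtIdeal, ← ker_toFirst, ← ker_toSecond]
  ext p
  simp [Prod.ext_iff]

noncomputable def ambientEmb : GTAmbient →ₐ[ZMod 11] P2 × P2 :=
  Ideal.Quotient.liftₐ gtIdeal (toFirst.prod toSecond) fun p hp => by
    rwa [← RingHom.mem_ker, ker_toFirst_prod_toSecond]

theorem ambientEmb_mk (p : MvPolynomial (Fin 6) (ZMod 11)) :
    ambientEmb (Ideal.Quotient.mk gtIdeal p) = (toFirst p, toSecond p) := rfl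

theorem ambientEmb_injective : Function.Injective ambientEmb := by
  refine (injective_iff_map_eq_zero ambientEmb).mpr fun a ha => ?_
  obtain ⟨p, rfl⟩ := Ideal.Quotient.mk_surjective a
  rw [Ideal.Quotient.eq_zero_iff_mem, ← ker_toFirst_prod_toSecond]
  exact ha

noncomputable def genMap : MvPolynomial (Fin 5) (ZMod 11) →ₐ[ZMod 11] P2 × P2 :=
  aeval ![(X 0 ^ 3, X 0), (X 0 ^ 2, X 1), (X 1, 0), (0, X 0 ^ 2 - X 1 ^ 3), (X 0 * X 1, 0)]

theorem ambientEmb_comp_gtMap : ambientEmb.comp gtMap = genMap := by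
  refine MvPolynomial.algHom_ext fun i => ?_
  simp only [AlgHom.comp_apply, gtMap, genMap, aeval_X, ambientEmb_mk]
  fin_cases i <;> simp [toFirst, toSecond]

theorem X_one_mul_mem_range_genMap (h : P2) :
    ((X 1 * h, 0) : P2 × P2) ∈ genMap.range ∧ ((X 0 * X 1 * h, 0) : P2 × P2) ∈ genMap.range := by
  have hb : ((X 0 ^ 2, X 1) : P2 × P2) ∈ genMap.range := ⟨X 1, by simp [genMap]⟩
  have hc : ((X 1, 0) : P2 × P2) ∈ genMap.range := ⟨X 2, by simp [genMap]⟩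
  have he : ((X 0 * X 1, 0) : P2 × P2) ∈ genMap.range := ⟨X 4, by simp [genMap]⟩
  induction h using MvPolynomial.induction_on with
  | C a =>
    constructor
    · convert genMap.range.smul_mem hc a using 1
      simp [smul_eq_C_mul, mul_comm]
    · convert genMap.range.smul_mem he a using 1
      simp [smul_eq_C_mul, mul_comm]
  | add p q hp hq =>
    constructor
    · convert genMap.range.add_mem hp.1 hq.1 using 1
      simp [mul_add]
    · convert genMap.range.add_mem hp.2 hq.2 using 1
      simp [mul_add]
  | mul_X p n hp =>
    fin_cases n <;> simp only [Fin.zero_eta, Fin.mk_one]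
    · constructor
      · convert hp.2 using 2
        ring
      · convert genMap.range.mul_mem hb hp.1 using 1
        rw [Prod.mk_mul_mk, mul_zero]
        ring_nf
    · constructor
      · convert genMap.range.mul_mem hp.1 hc using 1
        rw [Prod.mk_mul_mk, mul_zero]
        ring_nf
      · convert genMap.range.mul_mem hp.2 hc using 1
        rw [Prod.mk_mul_mk, mul_zero]
        ring_nf

theorem snd_genMap_rename (q : P2) : (genMap (rename ![0, 1] q)).2 = q := by
  have : (AlgHom.snd (ZMod 11) P2 P2).comp (genMap.comp (rename ![0, 1])) = AlgHom.id _ _ :=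
    MvPolynomial.algHom_ext fun i => by fin_cases i <;> simp [genMap]
  exact congr($this q)

theorem range_genMap :
    (genMap : MvPolynomial (Fin 5) (ZMod 11) →+* P2 × P2).range =
      ringPullback (toLine : P2 →+* Polynomial (ZMod 11)) toCusp := by
  have hcomp : toLine.comp ((AlgHom.fst (ZMod 11) P2 P2).comp genMap) =
      toCusp.comp ((AlgHom.snd (ZMod 11) P2 P2).comp genMap) :=
    MvPolynomial.algHom_ext fun i => by fin_cases i <;> simp [genMap, ← pow_mul]
  ext z
  constructor
  · rintro ⟨e, rfl⟩
    exact congr($hcomp e)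
  · intro hz
    -- `w = (z.2(x³,x²), z.2)`, so `z - w` is of the form `(y * h, 0)`.
    set w := genMap (rename ![0, 1] z.2)
    obtain ⟨h, hh⟩ := exists_eq_aeval_toLine_add_X_one_mul (z.1 - w.1)
    have hw : toLine w.1 = toCusp z.2 := by
      rw [← snd_genMap_rename z.2]
      exact congr($hcomp (rename ![0, 1] z.2))
    have hz : toLine z.1 = toCusp z.2 := hz
    rw [map_sub, hz, hw, sub_self, map_zero, zero_add] at hh
    have hsum : z = w + (X 1 * h, 0) := by
      ext
      · simp [← hh]
      · simp [w, snd_genMap_rename]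
    rw [hsum]
    exact genMap.range.add_mem (genMap.mem_range_self _) (X_one_mul_mem_range_genMap h).1

noncomputable def gtEmb : GTRing →+* P2 × P2 :=
  (ambientEmb : GTAmbient →+* P2 × P2).comp (RingHom.kerLift gtMap.toRingHom)

theorem gtEmb_injective : Function.Injective gtEmb :=
  ambientEmb_injective.comp (RingHom.kerLift_injective _)

theorem range_gtEmb :
    gtEmb.range = ringPullback (toLine : P2 →+* Polynomial (ZMod 11)) toCusp := by
  rw [gtEmb, ← RingHom.map_range, RingHom.range_kerLift, RingHom.map_range, ← range_genMap,
    ← ambientEmb_comp_gtMap]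
  rfl

theorem isReduced_gtRing : IsReduced GTRing := isReduced_of_injective gtEmb gtEmb_injective

theorem isSeminormalRing_gtRing : IsSeminormalRing GTRing :=
  isSeminormalRing_of_range_eq_ringPullback ker_toLine_ne_bot ker_toCusp_ne_bot gtEmb_injective
    range_gtEmb

theorem exists_mem_minimalPrimes_not_isSeminormalRing :
    ∃ q ∈ minimalPrimes GTRing, ¬ IsSeminormalRing (GTRing ⧸ q) := by
  set π := (RingHom.fst P2 P2).comp gtEmb
  have hrange : (RingHom.kerLift π).range = firstComponent := by
    rw [RingHom.range_kerLift, range_fst_comp_eq_comap_range range_gtEmb]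
    rfl
  exact ⟨_, ker_fst_comp_mem_minimalPrimes gtEmb_injective range_gtEmb ker_toLine_ne_bot,
    (isElementarySubintegral_X_zero hrange).not_isSeminormalRing (RingHom.kerLift_injective π)
      (hrange ▸ X_zero_notMem_firstComponent)⟩

end GrecoTraverso

/-- Greco–Traverso's example: a seminormal reduced finitely generated
algebra over a field, one of whose irreducible components (i.e. the quotient by one of its
minimal primes) is not seminormal. -/
theorem statement11 :
    IsReduced GTRing ∧ IsSeminormalRing GTRing ∧
      ∃ q ∈ minimalPrimes GTRing, ¬ IsSeminormalRing (GTRing ⧸ q) :=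
  ⟨GrecoTraverso.isReduced_gtRing, GrecoTraverso.isSeminormalRing_gtRing,
    GrecoTraverso.exists_mem_minimalPrimes_not_isSeminormalRing⟩
end
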